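/- arXiv:2010.11598 — 5 statements merged into one kernel-verified Lean document; each statement's English description precedes it below -/
import Mathlib

section
/- (Size of one-tree neighborhood) Let $\mathcal{C}'$ be a valid tuple of a $K$-tree ensemble where tree $t$ has depth at most $l$. Let $B^{(-t)}$ be the intersection of the bounding boxes of the other $K-1$ leaves in $\mathcal{C}'$, and let $k^{(t)}$ be the number of split thresholds $(j, \eta)$ of tree $t$ whose hyperplane $\{x : x_j = \eta\}$ intersects the interior of $B^{(-t)}$ (i.e., $\eta$ lies strictly in the $j$-th interval of $B^{(-t)}$). Then the number of leaves $i \ne \mathcal{C}'^{(t)}$ of tree $t$ with $B^i \cap B^{(-t)} \ne \emptyset$ is at most $2^{\min(k^{(t)}, l)} - 1$. -/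
open Set

/-- An axis-aligned box in `ℝ^d`: a product of half-open intervals `(l j, r j]`
with extended-real endpoints. -/
def box {d : ℕ} (l r : Fin d → EReal) : Set (Fin d → ℝ) :=
  {x | ∀ j, l j < (x j : EReal) ∧ (x j : EReal) ≤ r j}

/-- Distance from a point `a : ℝ` to the half-open interval `(l, r]`
(infimum of `|a - b|` over points `b` of the interval). -/
noncomputable def intervalDist (a : ℝ) (l r : EReal) : ℝ :=
  sInf {y | ∃ b : ℝ, l < (b : EReal) ∧ (b : EReal) ≤ r ∧ y = |a - b|}

/-- A binary decision tree on `ℝ^d`: leaves carry real values, internal nodes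
carry a split `(j, η)` routing `x` left iff `x j ≤ η`. -/
inductive DTree (d : ℕ) : Type
  | leaf (val : ℝ) : DTree d
  | node (j : Fin d) (η : ℝ) (L R : DTree d) : DTree d

namespace DTree

variable {d : ℕ}

/-- Depth: maximum number of internal nodes on a root-to-leaf path. -/
def depth : DTree d → ℕ
  | .leaf _ => 0
  | .node _ _ L R => max L.depth R.depth + 1

/-- Number of leaves. -/
def numLeaves : DTree d → ℕ
  | .leaf _ => 1
  | .node _ _ L R => L.numLeaves + R.numLeaves

/-- The list of leaf regions (sets of inputs routed to each leaf), in left-to-right order. -/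
def leafRegions : DTree d → List (Set (Fin d → ℝ))
  | .leaf _ => [Set.univ]
  | .node j η L R =>
      (L.leafRegions.map fun s => s ∩ {x | x j ≤ η}) ++
      (R.leafRegions.map fun s => s ∩ {x | η < x j})

/-- The region (bounding box) of the leaf with index `i`. -/
def region (T : DTree d) (i : ℕ) : Set (Fin d → ℝ) := T.leafRegions.getD i ∅

/-- Index of the leaf reached by input `x`. -/
noncomputable def leafIdx : DTree d → (Fin d → ℝ) → ℕ
  | .leaf _, _ => 0
  | .node j η L R, x => if x j ≤ η then L.leafIdx x else L.numLeaves + R.leafIdx x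

/-- The list of leaf values, in left-to-right order. -/
def leafVals : DTree d → List ℝ
  | .leaf v => [v]
  | .node _ _ L R => L.leafVals ++ R.leafVals

/-- Value of the leaf with index `i`. -/
def leafVal (T : DTree d) (i : ℕ) : ℝ := T.leafVals.getD i 0

/-- List of all split thresholds `(j, η)` appearing at internal nodes. -/
def splits : DTree d → List (Fin d × ℝ)
  | .leaf _ => []
  | .node j η L R => (j, η) :: (L.splits ++ R.splits)

end DTree

/-- The intersection `B(𝒞)` of the bounding boxes of the leaves of tuple `𝒞`
in a `K`-tree ensemble. -/
def Bset {d K : ℕ} (f : Fin K → DTree d) (C : Fin K → ℕ) : Set (Fin d → ℝ) :=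
  ⋂ t, (f t).region (C t)

/-- Hamming distance between two leaf tuples: the number of trees on which they differ. -/
def hamD {K : ℕ} {α : Type*} [DecidableEq α] (C C' : Fin K → α) : ℕ :=
  (Finset.univ.filter fun t => C t ≠ C' t).card


/-!
The leaves of a tree `T` whose regions meet a set `S` are bounded in two ways: a tree of depth
`l` has at most `2 ^ l` leaves, and, by induction on `T`, at most `2 ^ k` leaves meet `S` when
`k` splits of `T` cross `S`. Indeed, if the root split does not cross `S`, all of `S` is routed
to one subtree; if it does, neither subtree is crossed by the root split again, so both see at
most `k - 1` crossing splits. For `S = B^{(-t)}` the current leaf of tree `t` is among the leaves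
met, because the tuple is valid; this gives the `- 1`.
-/

namespace DTree

variable {d : ℕ}

lemma length_leafRegions (T : DTree d) : T.leafRegions.length = T.numLeaves := by
  induction T with
  | leaf => rfl
  | node j η L R ihL ihR => simp [leafRegions, numLeaves, ihL, ihR]

lemma region_node_left (j : Fin d) (η : ℝ) (L R : DTree d) {i : ℕ} (hi : i < L.numLeaves) :
    (node j η L R).region i = L.region i ∩ {x | x j ≤ η} := by
  rw [← length_leafRegions] at hi
  simp [region, leafRegions, List.getD_eq_getElem?_getD, List.getElem?_append_left, hi]

lemma region_node_right (j : Fin d) (η : ℝ) (L R : DTree d) {i : ℕ} (hi : i < R.numLeaves) :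
    (node j η L R).region (L.numLeaves + i) = R.region i ∩ {x | η < x j} := by
  rw [← length_leafRegions] at hi
  simp [region, leafRegions, List.getD_eq_getElem?_getD, List.getElem?_append_right,
    length_leafRegions, List.getElem?_eq_getElem hi]

lemma numLeaves_le_two_pow_depth (T : DTree d) : T.numLeaves ≤ 2 ^ T.depth := by
  induction T with
  | leaf => rfl
  | node j η L R ihL ihR =>
    have hL : 2 ^ L.depth ≤ 2 ^ max L.depth R.depth := Nat.pow_le_pow_right two_pos (le_max_left ..)
    have hR : 2 ^ R.depth ≤ 2 ^ max L.depth R.depth := Nat.pow_le_pow_right two_pos (le_max_right ..)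
    simp only [numLeaves, depth, pow_succ]
    omega

/-- The paper's `k^{(t)}` counts these splits for `T = f t` and `S = B^{(-t)}`. -/
def crossingSplits (T : DTree d) (S : Set (Fin d → ℝ)) : Set (Fin d × ℝ) :=
  {p | p ∈ T.splits ∧ (∃ x ∈ S, x p.1 ≤ p.2) ∧ (∃ x ∈ S, p.2 < x p.1)}

def leavesMeeting (T : DTree d) (S : Set (Fin d → ℝ)) : Set ℕ :=
  {i | i < T.numLeaves ∧ (T.region i ∩ S).Nonempty}

lemma crossingSplits_finite (T : DTree d) (S : Set (Fin d → ℝ)) :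
    (T.crossingSplits S).Finite :=
  T.splits.finite_toSet.subset fun _ hp => hp.1

lemma crossingSplits_mono {T T' : DTree d} {S S' : Set (Fin d → ℝ)}
    (hT : ∀ p ∈ T.splits, p ∈ T'.splits) (hS : S ⊆ S') :
    T.crossingSplits S ⊆ T'.crossingSplits S' :=
  fun p ⟨hp, ⟨x, hx, hxp⟩, ⟨y, hy, hyp⟩⟩ => ⟨hT p hp, ⟨x, hS hx, hxp⟩, ⟨y, hS hy, hyp⟩⟩

lemma leavesMeeting_empty (T : DTree d) : T.leavesMeeting ∅ = ∅ := by
  simp [leavesMeeting]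

lemma leavesMeeting_finite (T : DTree d) (S : Set (Fin d → ℝ)) : (T.leavesMeeting S).Finite :=
  (Set.finite_Iio T.numLeaves).subset fun _ hi => hi.1

lemma ncard_leavesMeeting_le_numLeaves (T : DTree d) (S : Set (Fin d → ℝ)) :
    (T.leavesMeeting S).ncard ≤ T.numLeaves :=
  (Set.ncard_le_ncard (fun _ hi => hi.1) (Set.finite_Iio _)).trans_eq (Set.ncard_Iio_nat _)

lemma leavesMeeting_node_subset (j : Fin d) (η : ℝ) (L R : DTree d) (S : Set (Fin d → ℝ)) :
    (node j η L R).leavesMeeting S ⊆ L.leavesMeeting (S ∩ {x | x j ≤ η}) ∪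
      (L.numLeaves + ·) '' R.leavesMeeting (S ∩ {x | η < x j}) := by
  rintro i ⟨hi, hmeet⟩
  rcases lt_or_ge i L.numLeaves with hiL | hiL
  · rw [region_node_left j η L R hiL] at hmeet
    obtain ⟨x, ⟨hxL, hxj⟩, hxS⟩ := hmeet
    exact .inl ⟨hiL, x, hxL, hxS, hxj⟩
  · obtain ⟨i, rfl⟩ := Nat.exists_eq_add_of_le hiL
    have hiR : i < R.numLeaves := by simp only [numLeaves] at hi; omega
    rw [region_node_right j η L R hiR] at hmeet
    obtain ⟨x, ⟨hxR, hxj⟩, hxS⟩ := hmeet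
    exact .inr ⟨i, ⟨hiR, x, hxR, hxS, hxj⟩, rfl⟩

lemma ncard_leavesMeeting_node_le (j : Fin d) (η : ℝ) (L R : DTree d) (S : Set (Fin d → ℝ)) :
    ((node j η L R).leavesMeeting S).ncard ≤
      (L.leavesMeeting (S ∩ {x | x j ≤ η})).ncard +
        (R.leavesMeeting (S ∩ {x | η < x j})).ncard := by
  calc _ ≤ (L.leavesMeeting (S ∩ {x | x j ≤ η}) ∪
          (L.numLeaves + ·) '' R.leavesMeeting (S ∩ {x | η < x j})).ncard :=
        Set.ncard_le_ncard (leavesMeeting_node_subset j η L R S)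
          ((leavesMeeting_finite ..).union ((leavesMeeting_finite ..).image _))
    _ ≤ _ := Set.ncard_union_le ..
    _ = _ := by rw [Set.ncard_image_of_injective _ (add_right_injective _)]

lemma crossingSplits_node_left_subset (j : Fin d) (η : ℝ) (L R : DTree d)
    (S : Set (Fin d → ℝ)) :
    L.crossingSplits (S ∩ {x | x j ≤ η}) ⊆ (node j η L R).crossingSplits S \ {(j, η)} := by
  intro p hp
  refine ⟨crossingSplits_mono (fun q hq => by simp [splits, hq]) inter_subset_left hp, ?_⟩
  rintro rfl
  obtain ⟨-, -, x, ⟨-, hxle⟩, hxlt⟩ := hp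
  exact hxlt.not_ge hxle

lemma crossingSplits_node_right_subset (j : Fin d) (η : ℝ) (L R : DTree d)
    (S : Set (Fin d → ℝ)) :
    R.crossingSplits (S ∩ {x | η < x j}) ⊆ (node j η L R).crossingSplits S \ {(j, η)} := by
  intro p hp
  refine ⟨crossingSplits_mono (fun q hq => by simp [splits, hq]) inter_subset_left hp, ?_⟩
  rintro rfl
  obtain ⟨-, ⟨x, ⟨-, hxlt⟩, hxle⟩, -⟩ := hp
  exact hxlt.not_ge hxle

lemma ncard_leavesMeeting_le_two_pow_ncard_crossingSplits (T : DTree d)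
    (S : Set (Fin d → ℝ)) :
    (T.leavesMeeting S).ncard ≤ 2 ^ (T.crossingSplits S).ncard := by
  induction T generalizing S with
  | leaf =>
    exact (ncard_leavesMeeting_le_numLeaves _ S).trans Nat.one_le_two_pow
  | node j η L R ihL ihR =>
    have hfin := crossingSplits_finite (node j η L R) S
    have hkL := Set.ncard_le_ncard (crossingSplits_node_left_subset j η L R S) hfin.sdiff
    have hkR := Set.ncard_le_ncard (crossingSplits_node_right_subset j η L R S) hfin.sdiff
    have hdiff := Set.ncard_sdiff_singleton_le ((node j η L R).crossingSplits S) (j, η)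
    refine (ncard_leavesMeeting_node_le j η L R S).trans ?_
    rcases (S ∩ {x | x j ≤ η}).eq_empty_or_nonempty with hSL | ⟨xL, hxL, hxLj⟩
    · rw [hSL, leavesMeeting_empty, Set.ncard_empty, zero_add]
      exact (ihR _).trans (Nat.pow_le_pow_right two_pos (hkR.trans hdiff))
    rcases (S ∩ {x | η < x j}).eq_empty_or_nonempty with hSR | ⟨xR, hxR, hxRj⟩
    · rw [hSR, leavesMeeting_empty, Set.ncard_empty, add_zero]
      exact (ihL _).trans (Nat.pow_le_pow_right two_pos (hkL.trans hdiff))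
    have hroot : (j, η) ∈ (node j η L R).crossingSplits S :=
      ⟨by simp [splits], ⟨xL, hxL, hxLj⟩, ⟨xR, hxR, hxRj⟩⟩
    have hrest := Set.ncard_sdiff_singleton_add_one hroot hfin
    set k := ((node j η L R).crossingSplits S).ncard
    calc _ ≤ 2 ^ (k - 1) + 2 ^ (k - 1) :=
          add_le_add ((ihL _).trans (Nat.pow_le_pow_right two_pos (by omega)))
            ((ihR _).trans (Nat.pow_le_pow_right two_pos (by omega)))
      _ = 2 ^ (k - 1 + 1) := by rw [pow_succ]; ring
      _ = 2 ^ k := by congr 1; omega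

lemma ncard_leavesMeeting_le (T : DTree d) (S : Set (Fin d → ℝ)) {l : ℕ} (hl : T.depth ≤ l) :
    (T.leavesMeeting S).ncard ≤ 2 ^ min (T.crossingSplits S).ncard l := by
  rw [(pow_right_monotone one_le_two).map_min]
  exact le_min (ncard_leavesMeeting_le_two_pow_ncard_crossingSplits T S)
    ((ncard_leavesMeeting_le_numLeaves T S).trans
      ((numLeaves_le_two_pow_depth T).trans (Nat.pow_le_pow_right two_pos hl)))

end DTree

open DTree in
/-- the number of leaves of tree `t` (other than the current one)
whose box meets `B^{(-t)}` is at most `2^(min k l) - 1`, where `k` is the number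
of split thresholds of tree `t` crossing the interior of `B^{(-t)}` and `l`
bounds the depth of tree `t`. -/
theorem stmt_9 {d K : ℕ} (f : Fin K → DTree d) (C' : Fin K → ℕ)
    (hb : ∀ t, C' t < (f t).numLeaves) (hvalid : (Bset f C').Nonempty)
    (t : Fin K) (l : ℕ) (hl : (f t).depth ≤ l) :
    {i : ℕ | i < (f t).numLeaves ∧ i ≠ C' t ∧
        ((f t).region i ∩ ⋂ s ∈ {s : Fin K | s ≠ t}, (f s).region (C' s)).Nonempty}.ncard ≤
      2 ^ (min
        ({p : Fin d × ℝ | p ∈ (f t).splits ∧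
          (∃ x ∈ ⋂ s ∈ {s : Fin K | s ≠ t}, (f s).region (C' s), x p.1 ≤ p.2) ∧
          (∃ x ∈ ⋂ s ∈ {s : Fin K | s ≠ t}, (f s).region (C' s), p.2 < x p.1)}.ncard)
        l) - 1 := by
  set S := ⋂ s ∈ {s : Fin K | s ≠ t}, (f s).region (C' s)
  obtain ⟨x, hx⟩ := hvalid
  have hxC := Set.mem_iInter.mp hx
  have hcurrent : C' t ∈ (f t).leavesMeeting S :=
    ⟨hb t, x, hxC t, Set.mem_iInter₂.mpr fun s _ => hxC s⟩
  have hothers : {i | i < (f t).numLeaves ∧ i ≠ C' t ∧ ((f t).region i ∩ S).Nonempty} =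
      (f t).leavesMeeting S \ {C' t} := by
    ext i
    simp only [leavesMeeting, Set.mem_ofPred_eq, Set.mem_sdiff, Set.mem_singleton_iff]
    tauto
  have hcount := Set.ncard_sdiff_singleton_add_one hcurrent (leavesMeeting_finite _ _)
  have hbound := ncard_leavesMeeting_le (f t) S hl
  rw [hothers]
  exact Nat.le_sub_one_of_lt (by unfold crossingSplits at hbound; omega)
end

section
/- (Bound neighborhood theorem, ℓ∞ case) Let $\mathcal{C}'$ be a valid tuple, $x_0 \in \mathbb{R}^d$, and let $x'$ be a point of the closure of $B(\mathcal{C}')$ minimizing $\|x - x_0\|_\infty$ over $B(\mathcal{C}')$ (attained coordinate-wise). Define $T_{\mathrm{Bound}}(\mathcal{C}')$ as the set of tree indices $t$ such that $x'$ equals the left or right endpoint of the bounding box $B^{\mathcal{C}'^{(t)}}$ in at least one coordinate. Then every valid tuple $\mathcal{C}$ with Hamming distance exactly 1 from $\mathcal{C}'$ and with $\mathrm{dist}_\infty(\mathcal{C}, x_0) < \mathrm{dist}_\infty(\mathcal{C}', x_0)$ differs from $\mathcal{C}'$ at some tree $t \in T_{\mathrm{Bound}}(\mathcal{C}')$, where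 $\mathrm{dist}_\infty(\mathcal{C}, x_0) = \inf_{x \in B(\mathcal{C})} \|x - x_0\|_\infty$. -/
open Set

private lemma stmt10_aux_lb (a : ℝ) (L : EReal) (h : L < (a : EReal)) :
    ∀ᶠ ε : ℝ in nhdsWithin 0 (Set.Ioi 0), L < ((a - ε : ℝ) : EReal) := by
  induction L using EReal.rec with
  | bot => exact Filter.Eventually.of_forall fun _ => EReal.bot_lt_coe _
  | coe l =>
    have hm : Set.Ioo (0:ℝ) (a - l) ∈ nhdsWithin (0:ℝ) (Set.Ioi 0) :=
      Ioo_mem_nhdsGT_of_mem ⟨le_refl _, sub_pos.mpr (EReal.coe_lt_coe_iff.mp h)⟩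
    exact Filter.eventually_of_mem hm fun ε hε => by
      exact_mod_cast show l < a - ε by linarith [hε.2]
  | top => exact absurd h (not_lt.mpr le_top)

private lemma stmt10_aux_rb (a : ℝ) (R : EReal) (h : (a : EReal) < R) :
    ∀ᶠ ε : ℝ in nhdsWithin 0 (Set.Ioi 0), ((a + ε : ℝ) : EReal) ≤ R := by
  induction R using EReal.rec with
  | bot => exact absurd h (not_lt.mpr bot_le)
  | coe r =>
    have hm : Set.Ioo (0:ℝ) (r - a) ∈ nhdsWithin (0:ℝ) (Set.Ioi 0) :=
      Ioo_mem_nhdsGT_of_mem ⟨le_refl _, sub_pos.mpr (EReal.coe_lt_coe_iff.mp h)⟩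
    exact Filter.eventually_of_mem hm fun ε hε => by
      exact_mod_cast show a + ε ≤ r by linarith [hε.2]
  | top => exact Filter.Eventually.of_forall fun _ => le_top

/-- bound neighborhood theorem, ℓ∞ case: any valid tuple at
Hamming distance exactly 1 from `C'` with strictly smaller ℓ∞ distance to `x₀`
must differ from `C'` on a tree that bounds the coordinatewise minimizer `x'`
(i.e. `x'` equals a left or right endpoint of that tree's leaf box in some
coordinate). -/
theorem stmt_10 {d K : ℕ} (f : Fin K → DTree d) (C' : Fin K → ℕ)
    (hb : ∀ t, C' t < (f t).numLeaves) (hvalid : (Bset f C').Nonempty)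
    (x₀ x' : Fin d → ℝ)
    (hcl : x' ∈ closure (Bset f C'))
    (hmin : ∀ j, ∀ x ∈ Bset f C', |x' j - x₀ j| ≤ |x j - x₀ j|)
    (lb rb : Fin K → Fin d → EReal)
    (hbox : ∀ t, (f t).region (C' t) = box (lb t) (rb t))
    (C : Fin K → ℕ) (hCb : ∀ t, C t < (f t).numLeaves)
    (hCvalid : (Bset f C).Nonempty)
    (hham : hamD C C' = 1)
    (hless : sInf {y | ∃ x ∈ Bset f C, y = ⨆ j, |x j - x₀ j|} <
             sInf {y | ∃ x ∈ Bset f C', y = ⨆ j, |x j - x₀ j|}) :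
    ∃ t, (∃ j, (x' j : EReal) = lb t j ∨ (x' j : EReal) = rb t j) ∧ C t ≠ C' t := by
  by_contra hcon
  push_neg at hcon
  -- the unique differing tree
  obtain ⟨t₀, ht₀⟩ := Finset.card_eq_one.mp hham
  have hne : C t₀ ≠ C' t₀ := by
    have h : t₀ ∈ Finset.univ.filter fun t => C t ≠ C' t := ht₀ ▸ Finset.mem_singleton_self t₀
    exact (Finset.mem_filter.mp h).2
  have heq : ∀ t, t ≠ t₀ → C t = C' t := by
    intro t ht
    by_contra h
    exact ht (Finset.mem_singleton.mp
      (ht₀ ▸ Finset.mem_filter.mpr ⟨Finset.mem_univ t, h⟩))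
  -- closure bounds for every tree
  have hclose : ∀ t k, lb t k ≤ (x' k : EReal) ∧ (x' k : EReal) ≤ rb t k := by
    intro t
    have h2 : x' ∈ closure ((f t).region (C' t)) :=
      closure_mono (Set.iInter_subset _ t) hcl
    rw [hbox t] at h2
    have hc : IsClosed {z : Fin d → ℝ | ∀ k, lb t k ≤ (z k : EReal) ∧ (z k : EReal) ≤ rb t k} := by
      have hE : {z : Fin d → ℝ | ∀ k, lb t k ≤ (z k : EReal) ∧ (z k : EReal) ≤ rb t k}
          = ⋂ k, (fun z : Fin d → ℝ => ((z k : ℝ) : EReal)) ⁻¹' Set.Icc (lb t k) (rb t k) := by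
        ext z; simp [Set.mem_iInter, Set.mem_Icc]
      rw [hE]
      exact isClosed_iInter fun k =>
        isClosed_Icc.preimage (continuous_coe_real_ereal.comp (continuous_apply k))
    have hsub2 : box (lb t) (rb t) ⊆
        {z : Fin d → ℝ | ∀ k, lb t k ≤ (z k : EReal) ∧ (z k : EReal) ≤ rb t k} :=
      fun z hz k => ⟨(hz k).1.le, (hz k).2⟩
    exact closure_minimal hsub2 hc h2
  -- strict interiority at t₀
  have hnb : ∀ k, (x' k : EReal) ≠ lb t₀ k ∧ (x' k : EReal) ≠ rb t₀ k := by
    intro k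
    constructor <;> intro h <;> exact hne (hcon t₀ ⟨k, by tauto⟩)
  have hstrict : ∀ k, lb t₀ k < (x' k : EReal) ∧ (x' k : EReal) < rb t₀ k := by
    intro k
    exact ⟨lt_of_le_of_ne (hclose t₀ k).1 (Ne.symm (hnb k).1),
      lt_of_le_of_ne (hclose t₀ k).2 (hnb k).2⟩
  -- a margin ε
  have heps : ∃ ε : ℝ, 0 < ε ∧ ∀ k, lb t₀ k < ((x' k - ε : ℝ) : EReal) ∧
      ((x' k + ε : ℝ) : EReal) ≤ rb t₀ k := by
    have hev : ∀ k : Fin d, ∀ᶠ ε : ℝ in nhdsWithin 0 (Set.Ioi 0),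
        lb t₀ k < ((x' k - ε : ℝ) : EReal) ∧ ((x' k + ε : ℝ) : EReal) ≤ rb t₀ k := by
      intro k
      exact (stmt10_aux_lb (x' k) (lb t₀ k) (hstrict k).1).and
        (stmt10_aux_rb (x' k) (rb t₀ k) (hstrict k).2)
    obtain ⟨ε, hεpos, hall⟩ :=
      (eventually_mem_nhdsWithin.and (Filter.eventually_all.mpr hev)).exists
    exact ⟨ε, hεpos, hall⟩
  obtain ⟨ε, hεpos, hall⟩ := heps
  -- main estimate : sInf over C' ≤ sInf over C, contradicting hless
  have hbdd : BddBelow {y : ℝ | ∃ x ∈ Bset f C', y = ⨆ j, |x j - x₀ j|} := by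
    refine ⟨0, ?_⟩
    rintro b ⟨x, hx, rfl⟩
    exact Real.iSup_nonneg fun j => abs_nonneg _
  have key : sInf {y | ∃ x ∈ Bset f C', y = ⨆ j, |x j - x₀ j|} ≤
      sInf {y | ∃ x ∈ Bset f C, y = ⨆ j, |x j - x₀ j|} := by
    apply le_csInf
    · obtain ⟨x, hx⟩ := hCvalid
      exact ⟨_, x, hx, rfl⟩
    rintro b ⟨x, hx, rfl⟩
    set y : Fin d → ℝ := fun k => max (x' k - ε) (min (x k) (x' k + ε)) with hy
    have hybetween : ∀ k, (y k = x k) ∨ (x' k < y k ∧ y k < x k) ∨ (x k < y k ∧ y k < x' k) := by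
      intro k
      rcases le_or_gt (x k) (x' k + ε) with h1 | h1
      · rcases le_or_gt (x' k - ε) (x k) with h2 | h2
        · left
          simp only [hy]
          rw [min_eq_left h1, max_eq_right h2]
        · right; right
          simp only [hy]
          rw [min_eq_left h1, max_eq_left h2.le]
          constructor <;> linarith
      · right; left
        simp only [hy]
        rw [min_eq_right h1.le, max_eq_right (by linarith)]
        constructor <;> linarith
    have hcube : ∀ k, x' k - ε ≤ y k ∧ y k ≤ x' k + ε := by
      intro k
      refine ⟨le_max_left _ _, max_le (by linarith) (min_le_right _ _)⟩
    have hyB : y ∈ Bset f C' := by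
      rw [Bset, Set.mem_iInter]
      intro t
      rw [hbox t]
      rcases eq_or_ne t t₀ with rfl | htne
      · intro k
        refine ⟨lt_of_lt_of_le (hall k).1 ?_, le_trans ?_ (hall k).2⟩
        · exact_mod_cast (hcube k).1
        · exact_mod_cast (hcube k).2
      · have hxt : x ∈ box (lb t) (rb t) := by
          have := Set.mem_iInter.mp hx t
          rwa [heq t htne, hbox t] at this
        intro k
        rcases hybetween k with hk | ⟨hk1, hk2⟩ | ⟨hk1, hk2⟩
        · rw [hk]; exact hxt k
        · constructor
          · exact lt_of_le_of_lt (hclose t k).1 (by exact_mod_cast hk1)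
          · exact le_trans (by exact_mod_cast hk2.le) (hxt k).2
        · constructor
          · exact lt_trans (hxt k).1 (by exact_mod_cast hk1)
          · exact le_trans (by exact_mod_cast hk2.le) (hclose t k).2
    have hled : ∀ k, |y k - x₀ k| ≤ |x k - x₀ k| := by
      intro k
      have hm := hmin k y hyB
      rcases hybetween k with hk | ⟨hk1, hk2⟩ | ⟨hk1, hk2⟩
      · rw [hk]
      · rcases abs_cases (x' k - x₀ k) with ⟨e1, s1⟩ | ⟨e1, s1⟩ <;>
          rcases abs_cases (y k - x₀ k) with ⟨e2, s2⟩ | ⟨e2, s2⟩ <;>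
          rcases abs_cases (x k - x₀ k) with ⟨e3, s3⟩ | ⟨e3, s3⟩ <;>
          rw [e1, e2] at hm <;> rw [e2, e3] <;> linarith
      · rcases abs_cases (x' k - x₀ k) with ⟨e1, s1⟩ | ⟨e1, s1⟩ <;>
          rcases abs_cases (y k - x₀ k) with ⟨e2, s2⟩ | ⟨e2, s2⟩ <;>
          rcases abs_cases (x k - x₀ k) with ⟨e3, s3⟩ | ⟨e3, s3⟩ <;>
          rw [e1, e2] at hm <;> rw [e2, e3] <;> linarith
    calc sInf {y | ∃ x ∈ Bset f C', y = ⨆ j, |x j - x₀ j|}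
        ≤ ⨆ j, |y j - x₀ j| := csInf_le hbdd ⟨y, hyB, rfl⟩
      _ ≤ ⨆ j, |x j - x₀ j| :=
          Real.iSup_le
            (fun j => (hled j).trans
              (le_ciSup (Set.finite_range fun j => |x j - x₀ j|).bddAbove j))
            (Real.iSup_nonneg fun j => abs_nonneg _)
  exact absurd hless (not_lt.mpr key)
end

section
/- (Key step of bound-neighborhood proof) Let $\mathcal{C}'$ and $\mathcal{C}_1$ be valid tuples with Hamming distance 1, differing on tree $t_1$. Suppose coordinate $j'$ and point $x_0$ satisfy: the interval of $B(\mathcal{C}')$ on coordinate $j'$ is $(l', r']$ with $r' < x_{0,j'}$, and there exists $x_1 \in B(\mathcal{C}_1)$ with $|x_{1,j'} - x_{0,j'}| < x_{0,j'} - r'$. Then there exists a tree $t$ such that the right endpoint of $B^{\mathcal{C}'^{(t)}}$ on coordinate $j'$ equals $r'$, and the leaf of $\mathcal{C}_1$ on tree $t$ differs from that of $\mathcal{C}'$ (hence $t = t_1$). -/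
open Set

/-- key step of the bound-neighborhood proof: if the interval of
`B(C')` on coordinate `j'` is `(l', r']` with `r' < x₀ j'` and some
`x₁ ∈ B(C₁)` satisfies `|x₁ j' - x₀ j'| < x₀ j' - r'`, then some tree `t`
attains the right endpoint `r'` on coordinate `j'` and `C₁` differs from `C'`
on that tree; hence `t = t₁`. -/
theorem stmt_11 {d K : ℕ} (f : Fin K → DTree d) (C' C₁ : Fin K → ℕ)
    (hb' : ∀ t, C' t < (f t).numLeaves) (hb1 : ∀ t, C₁ t < (f t).numLeaves)
    (hv' : (Bset f C').Nonempty) (hv1 : (Bset f C₁).Nonempty)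
    (t₁ : Fin K) (hham : hamD C₁ C' = 1) (hdiff : C₁ t₁ ≠ C' t₁)
    (lb rb : Fin K → Fin d → EReal)
    (hbox : ∀ t, (f t).region (C' t) = box (lb t) (rb t))
    (L R : Fin d → EReal) (hBC : Bset f C' = box L R)
    (j' : Fin d) (r' : ℝ) (hR : R j' = (r' : EReal))
    (x₀ : Fin d → ℝ) (hr : r' < x₀ j')
    (x₁ : Fin d → ℝ) (hx₁ : x₁ ∈ Bset f C₁)
    (hclose : |x₁ j' - x₀ j'| < x₀ j' - r') :
    ∃ t, rb t j' = (r' : EReal) ∧ C₁ t ≠ C' t ∧ t = t₁ := by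

  classical
  obtain ⟨y, hy⟩ := hv'
  have hyb : y ∈ box L R := hBC ▸ hy
  have hyR : (y j' : EReal) ≤ (r' : EReal) := hR ▸ (hyb j').2
  have hyR' : y j' ≤ r' := EReal.coe_le_coe_iff.mp hyR
  have hLr : L j' < (r' : EReal) := lt_of_lt_of_le (hyb j').1 hyR
  have hytree : ∀ t, y ∈ box (lb t) (rb t) := fun t => (hbox t) ▸ Set.mem_iInter.mp hy t
  -- z : y with j'-coordinate pushed to r'
  have hzb : Function.update y j' r' ∈ box L R := by
    intro j
    by_cases hj : j = j'
    · subst hj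
      simp only [Function.update_self]
      exact ⟨hLr, hR ▸ le_of_eq rfl⟩
    · simpa [Function.update_of_ne hj] using hyb j
  have hrle : ∀ t, (r' : EReal) ≤ rb t j' := by
    intro t
    have h2 : Function.update y j' r' ∈ box (lb t) (rb t) := by
      rw [← hbox t]
      exact Set.mem_iInter.mp (hBC ▸ hzb) t
    simpa using (h2 j').2
  have hattain : ∃ t, rb t j' = (r' : EReal) := by
    by_contra h
    push_neg at h
    have hlt : ∀ t, (r' : EReal) < rb t j' := fun t => lt_of_le_of_ne (hrle t) (Ne.symm (h t))
    obtain ⟨c, hc1, hc2⟩ : ∃ c : ℝ, r' < c ∧ ∀ t, (c : EReal) ≤ rb t j' := by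
      rcases isEmpty_or_nonempty (Fin K) with hK | hK
      · exact ⟨r' + 1, by linarith, fun t => (hK.false t).elim⟩
      · have hsel : ∀ t, ∃ c : ℝ, r' < c ∧ (c : EReal) ≤ rb t j' := by
          intro t
          obtain ⟨c, hc1, hc2⟩ := EReal.exists_between_coe_real (hlt t)
          exact ⟨c, EReal.coe_lt_coe_iff.mp hc1, le_of_lt hc2⟩
        choose cf hcf1 hcf2 using hsel
        refine ⟨Finset.univ.inf' Finset.univ_nonempty cf, ?_, ?_⟩
        · exact (Finset.lt_inf'_iff _).mpr fun t _ => hcf1 t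
        · intro t
          exact le_trans (EReal.coe_le_coe_iff.mpr (Finset.inf'_le _ (Finset.mem_univ t))) (hcf2 t)
    -- the point y updated to c lies in every tree box, hence in box L R: contradiction
    have hz'b : Function.update y j' c ∈ Bset f C' := by
      refine Set.mem_iInter.mpr fun t => ?_
      rw [hbox t]
      intro j
      by_cases hj : j = j'
      · subst hj
        simp only [Function.update_self]
        exact ⟨lt_of_lt_of_le (lt_of_lt_of_le (hytree t _).1 hyR)
          (le_of_lt (EReal.coe_lt_coe_iff.mpr hc1)), hc2 t⟩
      · simpa [Function.update_of_ne hj] using hytree t j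
    have := ((hBC ▸ hz'b : Function.update y j' c ∈ box L R) j').2
    rw [Function.update_self, hR] at this
    exact absurd (EReal.coe_le_coe_iff.mp this) (not_le.mpr hc1)
  obtain ⟨t, ht⟩ := hattain
  have hC : C₁ t ≠ C' t := by
    intro heq
    have hx1t : x₁ ∈ (f t).region (C₁ t) := Set.mem_iInter.mp hx₁ t
    rw [heq, hbox t] at hx1t
    have h2 := (hx1t j').2
    rw [ht] at h2
    have hle : x₁ j' ≤ r' := EReal.coe_le_coe_iff.mp h2
    have habs : x₀ j' - x₁ j' ≤ |x₁ j' - x₀ j'| := by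
      rw [abs_sub_comm]; exact le_abs_self _
    linarith
  obtain ⟨a, ha⟩ := Finset.card_eq_one.mp hham
  have ht1 : t₁ ∈ Finset.univ.filter fun s => C₁ s ≠ C' s :=
    Finset.mem_filter.mpr ⟨Finset.mem_univ _, hdiff⟩
  have htm : t ∈ Finset.univ.filter fun s => C₁ s ≠ C' s :=
    Finset.mem_filter.mpr ⟨Finset.mem_univ _, hC⟩
  rw [ha, Finset.mem_singleton] at ht1 htm
  exact ⟨t, ht, hC, htm.trans ht1.symm⟩
end

section
/- (Convergence guarantee) Let $f(\mathcal{C}) = \mathrm{sign}(\sum_{t=1}^K v^{\mathcal{C}^{(t)}})$ be the ensemble prediction for tuple $\mathcal{C}$ with leaf values $v^i \in \mathbb{R}$, let $y_0 \in \{-1, +1\}$ and $x_0 \in \mathbb{R}^d$. Suppose $\bar{\mathcal{C}}$ is an adversarial valid tuple ($f(\bar{\mathcal{C}}) \ne y_0$, i.e., $y_0 \sum_t v^{\bar{\mathcal{C}}^{(t)}} < 0$) such that no valid tuple at Hamming distance 1 from $\bar{\mathcal{C}}$ is adversarial with strictly smaller distance to $x_0$. Let $V^+$ be the union of all leaves appearing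 in valid tuples at Hamming distance 1 from $\bar{\mathcal{C}}$ with strictly smaller distance, together with the leaves of $\bar{\mathcal{C}}$. Then there is no valid tuple $\mathcal{C}^*$ all of whose leaves belong to $V^+$ with $f(\mathcal{C}^*) \ne y_0$ and strictly smaller distance to $x_0$ than $\bar{\mathcal{C}}$. -/
open Set

/-- convergence guarantee: if no valid adversarial tuple at
Hamming distance 1 from `Cbar` has strictly smaller distance to `x₀`, then
there is no valid adversarial tuple all of whose leaves lie in `V⁺` (leaves of
`Cbar` together with leaves of advanced distance-1 neighbors) with strictly
smaller distance to `x₀`. -/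
theorem stmt_12 {d K : ℕ} (f : Fin K → DTree d)
    (x₀ : Fin d → ℝ) (dst : (Fin d → ℝ) → ℝ)
    (y₀ : ℝ) (hy : y₀ = 1 ∨ y₀ = -1)
    (Cbar : Fin K → ℕ) (hb : ∀ t, Cbar t < (f t).numLeaves)
    (hv : (Bset f Cbar).Nonempty)
    (hadv : y₀ * ∑ t, (f t).leafVal (Cbar t) < 0)
    (distC : (Fin K → ℕ) → ℝ)
    (hdistC : ∀ C, distC C = sInf {y | ∃ x ∈ Bset f C, y = dst (x - x₀)})
    (hopt : ∀ C : Fin K → ℕ, (∀ t, C t < (f t).numLeaves) → (Bset f C).Nonempty →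
      hamD C Cbar = 1 → y₀ * ∑ t, (f t).leafVal (C t) < 0 → ¬ distC C < distC Cbar) :
    ¬ ∃ Cstar : Fin K → ℕ, (∀ t, Cstar t < (f t).numLeaves) ∧
      (∀ t, Cstar t = Cbar t ∨ ∃ C : Fin K → ℕ, (∀ s, C s < (f s).numLeaves) ∧
        (Bset f C).Nonempty ∧ hamD C Cbar = 1 ∧ distC C < distC Cbar ∧ C t = Cstar t) ∧
      (Bset f Cstar).Nonempty ∧ y₀ * ∑ t, (f t).leafVal (Cstar t) < 0 ∧
      distC Cstar < distC Cbar := by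
  rintro ⟨Cstar, hb', hleaves, hne, hadv', hlt⟩
  set S := ∑ t, (f t).leafVal (Cbar t) with hS
  set T := Finset.univ.filter (fun t => Cstar t ≠ Cbar t) with hT
  have hTne : T.Nonempty := by
    by_contra h
    have heq : Cstar = Cbar := by
      funext t
      by_contra ht
      exact h ⟨t, by simp [hT, ht]⟩
    rw [heq] at hlt; exact lt_irrefl _ hlt
  have key : ∀ t ∈ T,
      -(y₀ * S) ≤ y₀ * ((f t).leafVal (Cstar t) - (f t).leafVal (Cbar t)) := by
    intro t ht
    have htne : Cstar t ≠ Cbar t := by simpa [hT] using ht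
    rcases hleaves t with h | ⟨C, hC1, hC2, hC3, hC4, hC5⟩
    · exact absurd h htne
    have hCeq : ∀ s, s ≠ t → C s = Cbar s := by
      intro s hs
      by_contra hne'
      have hsub : ({s, t} : Finset (Fin K)) ⊆ Finset.univ.filter fun u => C u ≠ Cbar u := by
        intro u hu
        simp only [Finset.mem_insert, Finset.mem_singleton] at hu
        rcases hu with rfl | rfl
        · simpa using hne'
        · simp only [Finset.mem_filter, Finset.mem_univ, true_and]
          rw [hC5]; exact htne
      have hcard := Finset.card_le_card hsub
      unfold hamD at hC3
      rw [hC3, Finset.card_insert_of_notMem (by simpa using hs),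
        Finset.card_singleton] at hcard
      omega
    have hsum : ∑ s, (f s).leafVal (C s)
        = S + ((f t).leafVal (Cstar t) - (f t).leafVal (Cbar t)) := by
      have hdiff : ∑ s, ((f s).leafVal (C s) - (f s).leafVal (Cbar s))
          = (f t).leafVal (Cstar t) - (f t).leafVal (Cbar t) := by
        rw [Finset.sum_eq_single t]
        · rw [hC5]
        · intro s _ hs; rw [hCeq s hs]; ring
        · simp
      rw [Finset.sum_sub_distrib] at hdiff
      rw [hS]; linarith
    by_contra hlt2
    push_neg at hlt2
    have hadvC : y₀ * ∑ s, (f s).leafVal (C s) < 0 := by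
      rw [hsum, mul_add]; linarith
    exact hopt C hC1 hC2 hC3 hadvC hC4
  have hsplit : ∑ t, (f t).leafVal (Cstar t)
      = S + ∑ t ∈ T, ((f t).leafVal (Cstar t) - (f t).leafVal (Cbar t)) := by
    have hext : ∑ t ∈ T, ((f t).leafVal (Cstar t) - (f t).leafVal (Cbar t))
        = ∑ t, ((f t).leafVal (Cstar t) - (f t).leafVal (Cbar t)) := by
      apply Finset.sum_subset (Finset.subset_univ T)
      intro t _ ht
      have : Cstar t = Cbar t := by
        by_contra h; exact ht (by simp [hT, h])
      rw [this]; ring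
    rw [hext, Finset.sum_sub_distrib, hS]; ring
  have hpos : 0 < -(y₀ * S) := by
    rw [hS] at *; linarith [hadv]
  have hcard : 1 ≤ T.card := Finset.card_pos.mpr hTne
  have hsumT : T.card • (-(y₀ * S)) ≤
      ∑ t ∈ T, y₀ * ((f t).leafVal (Cstar t) - (f t).leafVal (Cbar t)) :=
    Finset.card_nsmul_le_sum T _ _ key
  rw [nsmul_eq_mul] at hsumT
  have hge : -(y₀ * S) ≤
      ∑ t ∈ T, y₀ * ((f t).leafVal (Cstar t) - (f t).leafVal (Cbar t)) := by
    have h1 : (1 : ℝ) ≤ (T.card : ℝ) := by exact_mod_cast hcard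
    nlinarith
  rw [← Finset.mul_sum] at hge
  rw [hsplit, mul_add] at hadv'
  linarith
end

section
/- (Hybrid tuple adversariality, margin argument) Let $v', v^* \in \mathbb{R}^K$, $y_0 \in \{-1, +1\}$ with $y_0 \sum_t v'_t < 0$ and $y_0 \sum_t v^*_t < 0$. Let $t_{\min} = \arg\min_t y_0(v^*_t - v'_t)$ and define $v_1$ by $v_{1,t} = v'_t$ for $t \ne t_{\min}$ and $v_{1, t_{\min}} = v^*_{t_{\min}}$. Then $y_0 \sum_t v_{1,t} < 0$. -/
open Set

/-- hybrid tuple adversariality, margin argument: replacing the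
coordinate of minimal margin difference in an adversarial leaf-value vector by
the corresponding value of another adversarial vector preserves adversariality. -/
theorem stmt_13 {K : ℕ} (v' vstar : Fin K → ℝ) (y₀ : ℝ) (hy : y₀ = 1 ∨ y₀ = -1)
    (h' : y₀ * ∑ t, v' t < 0) (hstar : y₀ * ∑ t, vstar t < 0)
    (tmin : Fin K)
    (hmin : ∀ t, y₀ * (vstar tmin - v' tmin) ≤ y₀ * (vstar t - v' t)) :
    y₀ * ∑ t, Function.update v' tmin (vstar tmin) t < 0 := by
  have hK : 1 ≤ (K : ℝ) := by exact_mod_cast Fin.pos tmin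
  have hsum : ∑ t, Function.update v' tmin (vstar tmin) t
      = ∑ t, v' t + (vstar tmin - v' tmin) := by
    rw [Finset.sum_update_of_mem (Finset.mem_univ _), Finset.sdiff_singleton_eq_erase,
      ← Finset.sum_erase_add Finset.univ v' (Finset.mem_univ tmin)]
    ring
  set δ := y₀ * (vstar tmin - v' tmin) with hδ
  have key : y₀ * ∑ t, Function.update v' tmin (vstar tmin) t
      = y₀ * ∑ t, v' t + δ := by rw [hsum]; ring
  rw [key]
  rcases le_or_gt δ 0 with h | h
  · linarith
  · have hKδ : (K : ℝ) * δ ≤ y₀ * ∑ t, vstar t - y₀ * ∑ t, v' t := by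
      have := Finset.sum_le_sum (f := fun _ => δ) (g := fun t => y₀ * (vstar t - v' t)) (fun t (_ : t ∈ Finset.univ) => hmin t)
      simp only [Finset.sum_const, Finset.card_univ, Fintype.card_fin, nsmul_eq_mul] at this
      have : (K : ℝ) * δ ≤ ∑ t, y₀ * (vstar t - v' t) := this
      calc (K : ℝ) * δ ≤ ∑ t, y₀ * (vstar t - v' t) := this
        _ = y₀ * ∑ t, vstar t - y₀ * ∑ t, v' t := by
            simp only [mul_sub, Finset.sum_sub_distrib, Finset.mul_sum]
    have hAB : (0:ℝ) < y₀ * ∑ t, vstar t - y₀ * ∑ t, v' t := by nlinarith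
    have : δ ≤ y₀ * ∑ t, vstar t - y₀ * ∑ t, v' t := by nlinarith
    linarith
end
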